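/- For every weighted digraph G with Kirchhoff matrix L, the normalized matrix of maximum out forests satisfies J̄ = lim_{τ→∞} (I + τL)^{-1}. -/

import Mathlib

open scoped Classical
open Finset

variable {n : ℕ}

/-- The arc relation of a finite arc set. -/
def arcRel (F : Finset (Fin n × Fin n)) : Fin n → Fin n → Prop :=
  fun a b => (a, b) ∈ F

/-- A diverging forest: no directed cycles, and every vertex has in-degree at most 1. -/
def IsDivForest (F : Finset (Fin n × Fin n)) : Prop :=
  (∀ v, ¬ Relation.TransGen (arcRel F) v v) ∧
  ∀ w z₁ z₂, (z₁, w) ∈ F → (z₂, w) ∈ F → z₁ = z₂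

/-- `F` is a spanning diverging forest of the weighted digraph whose arcs are the
pairs of positive weight under `ε`. -/
def IsSpForest (ε : Fin n → Fin n → ℝ) (F : Finset (Fin n × Fin n)) : Prop :=
  (∀ p ∈ F, 0 < ε p.1 p.2) ∧ IsDivForest F

/-- The weight of a forest: the product of its arc weights. -/
noncomputable def fweight (ε : Fin n → Fin n → ℝ) (F : Finset (Fin n × Fin n)) : ℝ :=
  ∏ p ∈ F, ε p.1 p.2

/-- The weight of a set of forests: the sum of the weights of its members. -/
noncomputable def swt (ε : Fin n → Fin n → ℝ)
    (S : Finset (Finset (Fin n × Fin n))) : ℝ :=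
  ∑ F ∈ S, fweight ε F

/-- The set of spanning diverging forests with `k` arcs. -/
noncomputable def forestsK (ε : Fin n → Fin n → ℝ) (k : ℕ) :
    Finset (Finset (Fin n × Fin n)) :=
  Finset.univ.filter (fun F => IsSpForest ε F ∧ F.card = k)

/-- The set of spanning diverging forests with `k` arcs in which vertex `i` belongs to
the tree diverging from `j` (so `j` is a root and `i` is reachable from `j`). -/
noncomputable def forestsKji (ε : Fin n → Fin n → ℝ) (k : ℕ) (j i : Fin n) :
    Finset (Finset (Fin n × Fin n)) :=
  (forestsK ε k).filter (fun F => (∀ u, (u, j) ∉ F) ∧ Relation.ReflTransGen (arcRel F) j i)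

/-- The maximum number of arcs in a spanning diverging forest, equal to `n - v`
where `v` is the forest dimension. -/
noncomputable def maxArcs (ε : Fin n → Fin n → ℝ) : ℕ :=
  (Finset.univ.filter (fun F : Finset (Fin n × Fin n) => IsSpForest ε F)).sup Finset.card

/-- The Kirchhoff matrix of the weighted digraph with weights `ε`. -/
noncomputable def Kirchhoff (ε : Fin n → Fin n → ℝ) : Matrix (Fin n) (Fin n) ℝ :=
  Matrix.of fun i j =>
    if i = j then ∑ k ∈ Finset.univ.filter (· ≠ i), ε k i else - ε j i

/-- The matrix of maximum out forests: entry `(i, j)` is the total weight of maximum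
out forests in which `i` lies in the tree diverging from `j`. -/
noncomputable def Qmax (ε : Fin n → Fin n → ℝ) : Matrix (Fin n) (Fin n) ℝ :=
  Matrix.of fun i j => swt ε (forestsKji ε (maxArcs ε) j i)

/-- The normalized matrix of maximum out forests. -/
noncomputable def Jbar (ε : Fin n → Fin n → ℝ) : Matrix (Fin n) (Fin n) ℝ :=
  (swt ε (forestsK ε (maxArcs ε)))⁻¹ • Qmax ε

namespace Aux


lemma rtg_mono {F G : Finset (Fin n × Fin n)} (h : F ⊆ G) {a b : Fin n}
    (hab : Relation.ReflTransGen (arcRel F) a b) : Relation.ReflTransGen (arcRel G) a b :=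
  by
  induction hab with
  | refl => exact Relation.ReflTransGen.refl
  | tail _ hx ih => exact ih.tail (h hx)

lemma tg_mono {F G : Finset (Fin n × Fin n)} (h : F ⊆ G) {a b : Fin n}
    (hab : Relation.TransGen (arcRel F) a b) : Relation.TransGen (arcRel G) a b :=
  by
  induction hab with
  | single hx => exact Relation.TransGen.single (h hx)
  | tail _ hx ih => exact ih.tail (h hx)

/-- splitting reachability over an inserted arc -/
lemma rtg_insert_split {F : Finset (Fin n × Fin n)} {x i a b : Fin n}
    (h : Relation.ReflTransGen (arcRel (insert (x, i) F)) a b) :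
    Relation.ReflTransGen (arcRel F) a b ∨
      (Relation.ReflTransGen (arcRel F) a x ∧ Relation.ReflTransGen (arcRel F) i b) := by
  induction h with
  | refl => exact Or.inl Relation.ReflTransGen.refl
  | tail hac harc ih =>
    rename_i c b'
    rcases Finset.mem_insert.mp harc with heq | hmem
    · have h1 : c = x := congrArg Prod.fst heq
      have h2 : b' = i := congrArg Prod.snd heq
      subst h1; subst h2
      rcases ih with h | ⟨h, _⟩
      · exact Or.inr ⟨h, Relation.ReflTransGen.refl⟩
      · exact Or.inr ⟨h, Relation.ReflTransGen.refl⟩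
    · rcases ih with h | ⟨h1, h2⟩
      · exact Or.inl (h.tail hmem)
      · exact Or.inr ⟨h1, h2.tail hmem⟩

/-- splitting reachability over an erased arc -/
lemma rtg_erase_split {F : Finset (Fin n × Fin n)} {y c a b : Fin n}
    (h : Relation.ReflTransGen (arcRel F) a b) :
    Relation.ReflTransGen (arcRel (F.erase (y, c))) a b ∨
      Relation.ReflTransGen (arcRel F) c b := by
  induction h with
  | refl => exact Or.inl Relation.ReflTransGen.refl
  | tail had harc ih =>
    rename_i d b'
    rcases ih with h | h
    · by_cases he : (d, b') = (y, c)
      · have : b' = c := congrArg Prod.snd he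
        subst this
        exact Or.inr Relation.ReflTransGen.refl
      · exact Or.inl (h.tail (Finset.mem_erase.mpr ⟨he, harc⟩))
    · exact Or.inr (h.tail harc)

/-- comparability of ancestors in an in-degree ≤ 1 graph -/
lemma rtg_comparable {F : Finset (Fin n × Fin n)}
    (hdeg : ∀ w z₁ z₂, (z₁, w) ∈ F → (z₂, w) ∈ F → z₁ = z₂) {i j z : Fin n}
    (hi : Relation.ReflTransGen (arcRel F) i z) (hj : Relation.ReflTransGen (arcRel F) j z) :
    Relation.ReflTransGen (arcRel F) i j ∨ Relation.ReflTransGen (arcRel F) j i := by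
  induction hj generalizing i with
  | refl => exact Or.inl hi
  | tail hjw harc ih =>
    rename_i w z'
    rcases hi.cases_tail with rfl | ⟨y, hiy, hyz⟩
    · exact Or.inr (hjw.tail harc)
    · have : y = w := hdeg _ _ _ hyz harc
      subst this
      exact ih hiy

/-- reaching a root means equality -/
lemma rtg_root_eq {F : Finset (Fin n × Fin n)} {i j : Fin n}
    (hroot : ∀ u, (u, j) ∉ F) (h : Relation.ReflTransGen (arcRel F) i j) : i = j := by
  rcases h.cases_tail with rfl | ⟨y, _, hyz⟩
  · rfl
  · exact absurd hyz (hroot y)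

/-- acyclicity is preserved by inserting an arc `(x,i)` with `i` not reaching `x` -/
lemma acyclic_insert {F : Finset (Fin n × Fin n)} {x i : Fin n}
    (hacyc : ∀ v, ¬ Relation.TransGen (arcRel F) v v)
    (hna : ¬ Relation.ReflTransGen (arcRel F) i x) :
    ∀ v, ¬ Relation.TransGen (arcRel (insert (x, i) F)) v v := by
  intro v hv
  rcases Relation.TransGen.tail'_iff.mp hv with ⟨w, hvw, harc⟩
  rcases Finset.mem_insert.mp harc with heq | hmem
  · have h1 : w = x := congrArg Prod.fst heq
    have h2 : v = i := congrArg Prod.snd heq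
    subst h1; subst h2
    rcases rtg_insert_split hvw with h | ⟨h1, _⟩
    · exact hna h
    · exact hna h1
  · rcases rtg_insert_split hvw with h | ⟨h1, h2⟩
    · exact hacyc v (Relation.TransGen.tail' h hmem)
    · -- i ⇝ w, (w,v) ∈ F so i ⇝ v ; v ⇝ x so i ⇝ x
      exact hna ((h2.tail hmem).trans h1)

end Aux

namespace Aux2
open Aux

variable {ε : Fin n → Fin n → ℝ}

lemma mem_forestsK {F : Finset (Fin n × Fin n)} {k : ℕ} :
    F ∈ forestsK ε k ↔ IsSpForest ε F ∧ F.card = k := by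
  simp [forestsK]

lemma mem_forestsKji {F : Finset (Fin n × Fin n)} {k : ℕ} {j i : Fin n} :
    F ∈ forestsKji ε k j i ↔ (IsSpForest ε F ∧ F.card = k) ∧
      (∀ u, (u, j) ∉ F) ∧ Relation.ReflTransGen (arcRel F) j i := by
  simp [forestsKji, mem_forestsK]

lemma arc_pos {F : Finset (Fin n × Fin n)} (hF : IsSpForest ε F) {p : Fin n × Fin n}
    (hp : p ∈ F) : 0 < ε p.1 p.2 := hF.1 p hp

lemma arc_ne (hloop : ∀ i, ε i i = 0) {F : Finset (Fin n × Fin n)} (hF : IsSpForest ε F)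
    {x y : Fin n} (hp : (x, y) ∈ F) : x ≠ y := by
  intro h; subst h
  have := hF.1 _ hp
  simp [hloop] at this

/-- erasing preserves being a spanning forest -/
lemma spf_erase {F : Finset (Fin n × Fin n)} (hF : IsSpForest ε F) (p : Fin n × Fin n) :
    IsSpForest ε (F.erase p) := by
  refine ⟨fun q hq => hF.1 q (Finset.erase_subset _ _ hq), ?_, ?_⟩
  · intro v hv
    exact hF.2.1 v (tg_mono (Finset.erase_subset _ _) hv)
  · intro w z₁ z₂ h1 h2
    exact hF.2.2 w z₁ z₂ (Finset.erase_subset _ _ h1) (Finset.erase_subset _ _ h2)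

/-- inserting an arc `(x,i)` preserves being a spanning forest -/
lemma spf_insert {F : Finset (Fin n × Fin n)} (hF : IsSpForest ε F) {x i : Fin n}
    (hpos : 0 < ε x i) (hroot : ∀ u, (u, i) ∉ F)
    (hna : ¬ Relation.ReflTransGen (arcRel F) i x) :
    IsSpForest ε (insert (x, i) F) := by
  refine ⟨?_, acyclic_insert hF.2.1 hna, ?_⟩
  · intro q hq
    rcases Finset.mem_insert.mp hq with rfl | hq
    · exact hpos
    · exact hF.1 q hq
  · intro w z₁ z₂ h1 h2
    rcases Finset.mem_insert.mp h1 with he1 | h1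
    · rcases Finset.mem_insert.mp h2 with he2 | h2
      · rw [Prod.ext_iff] at he1 he2
        simp at he1 he2
        rw [he1.1, he2.1]
      · rw [Prod.ext_iff] at he1; simp at he1
        exact absurd (he1.2 ▸ h2) (hroot z₂)
    · rcases Finset.mem_insert.mp h2 with he2 | h2
      · rw [Prod.ext_iff] at he2; simp at he2
        exact absurd (he2.2 ▸ h1) (hroot z₁)
      · exact hF.2.2 w z₁ z₂ h1 h2

/-- in a forest, erasing the in-arc of `i` leaves no in-arc of `i` -/
lemma no_inarc_erase {F : Finset (Fin n × Fin n)} (hdeg : ∀ w z₁ z₂, (z₁, w) ∈ F → (z₂, w) ∈ F → z₁ = z₂)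
    {y i : Fin n} (hy : (y, i) ∈ F) : ∀ u, (u, i) ∉ F.erase (y, i) := by
  intro u hu
  have hmem := Finset.mem_of_mem_erase hu
  have hne := Finset.ne_of_mem_erase hu
  exact hne (by rw [hdeg i u y hmem hy])

/-- the parent of a vertex -/
noncomputable def par (F : Finset (Fin n × Fin n)) (i : Fin n) : Fin n :=
  if h : ∃ z, (z, i) ∈ F then h.choose else i

lemma par_mem {F : Finset (Fin n × Fin n)} {i : Fin n} (h : ∃ z, (z, i) ∈ F) :
    (par F i, i) ∈ F := by
  rw [par, dif_pos h]; exact h.choose_spec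

lemma par_eq {F : Finset (Fin n × Fin n)}
    (hdeg : ∀ w z₁ z₂, (z₁, w) ∈ F → (z₂, w) ∈ F → z₁ = z₂) {z i : Fin n}
    (hz : (z, i) ∈ F) : par F i = z :=
  hdeg i _ _ (par_mem ⟨z, hz⟩) hz

end Aux2

namespace Aux3
open Aux Aux2

variable {ε : Fin n → Fin n → ℝ}

/-- B1: forests of `k+1` arcs with `j` root reaching `i ≠ j` correspond to pairs
`(z, F)` with `F` a `k`-forest, `j` root reaching `z`, `i` without in-arc. -/
lemma bij_insert_A (hnn : ∀ a b, 0 ≤ ε a b) (hloop : ∀ a, ε a a = 0)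
    (k : ℕ) {i j : Fin n} (hij : i ≠ j) :
    ∑ p ∈ (Finset.univ.filter (fun p : Fin n × Finset (Fin n × Fin n) =>
        p.1 ≠ i ∧ 0 < ε p.1 i ∧ p.2 ∈ forestsKji ε k j p.1)).filter
        (fun p => ∀ u, (u, i) ∉ p.2), ε p.1 i * fweight ε p.2
      = ∑ G ∈ forestsKji ε (k + 1) j i, fweight ε G := by
  refine Finset.sum_bij (fun p _ => insert (p.1, i) p.2) ?_ ?_ ?_ ?_
  · rintro ⟨x, F⟩ hp
    simp only [Finset.mem_filter, Finset.mem_univ, true_and] at hp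
    obtain ⟨⟨hxi0, hxi, hF⟩, hc1⟩ := hp
    rw [mem_forestsKji] at hF
    obtain ⟨⟨hspf, hcard⟩, hroot, hreach⟩ := hF
    have hnotmem : (x, i) ∉ F := hc1 x
    have hna : ¬ Relation.ReflTransGen (arcRel F) i x := by
      intro h
      rcases rtg_comparable hspf.2.2 h hreach with h' | h'
      · exact hij (rtg_root_eq hroot h')
      · rcases h'.cases_tail with h'' | ⟨y, _, hy⟩
        · exact hij h''
        · exact hc1 y hy
    rw [mem_forestsKji]
    refine ⟨⟨spf_insert hspf hxi hc1 hna, ?_⟩, ?_, ?_⟩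
    · rw [Finset.card_insert_of_notMem hnotmem, hcard]
    · intro u hu
      rcases Finset.mem_insert.mp hu with he | hu'
      · rw [Prod.ext_iff] at he; simp at he
        exact hij he.2.symm
      · exact hroot u hu'
    · exact (rtg_mono (Finset.subset_insert _ _) hreach).tail
        (Finset.mem_insert_self _ _)
  · rintro ⟨x₁, F₁⟩ h₁ ⟨x₂, F₂⟩ h₂ heq
    simp only [Finset.mem_filter, Finset.mem_univ, true_and] at h₁ h₂
    have hrec : ∀ (x : Fin n) (F : Finset (Fin n × Fin n)), (∀ u, (u, i) ∉ F) →
        (insert (x, i) F).filter (fun q => q.2 ≠ i) = F := by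
      intro x F hc1
      ext q
      simp only [Finset.mem_filter, Finset.mem_insert]
      constructor
      · rintro ⟨rfl | hq, hne⟩
        · exact absurd rfl hne
        · exact hq
      · intro hq
        refine ⟨Or.inr hq, fun hq2 => ?_⟩
        exact hc1 q.1 (by rwa [← hq2, Prod.mk.eta])
    replace heq : insert (x₁, i) F₁ = insert (x₂, i) F₂ := heq
    have hF : F₁ = F₂ := by
      rw [← hrec x₁ F₁ h₁.2, ← hrec x₂ F₂ h₂.2, heq]
    have hx : x₁ = x₂ := by
      have : (x₁, i) ∈ insert (x₂, i) F₂ := heq ▸ Finset.mem_insert_self _ _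
      rcases Finset.mem_insert.mp this with he | hmem
      · exact congrArg Prod.fst he
      · exact absurd hmem (h₂.2 x₁)
    rw [Prod.ext_iff]; exact ⟨hx, hF⟩
  · intro G hG
    rw [mem_forestsKji] at hG
    obtain ⟨⟨hspf, hcard⟩, hroot, hreach⟩ := hG
    rcases hreach.cases_tail with he | ⟨z, hjz, hzi⟩
    · exact absurd he hij
    · have hzne : z ≠ i := arc_ne hloop hspf hzi
      have hzpos : 0 < ε z i := hspf.1 _ hzi
      have hnoin : ∀ u, (u, i) ∉ G.erase (z, i) := no_inarc_erase hspf.2.2 hzi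
      refine ⟨(z, G.erase (z, i)), ?_, Finset.insert_erase hzi⟩
      simp only [Finset.mem_filter, Finset.mem_univ, true_and]
      refine ⟨⟨hzne, hzpos, ?_⟩, hnoin⟩
      rw [mem_forestsKji]
      refine ⟨⟨spf_erase hspf _, ?_⟩, ?_, ?_⟩
      · rw [Finset.card_erase_of_mem hzi, hcard]; omega
      · exact fun u hu => hroot u (Finset.mem_of_mem_erase hu)
      · rcases rtg_erase_split (y := z) (c := i) hjz with h | h
        · exact h
        · exact absurd (Relation.TransGen.tail' h hzi) (hspf.2.1 i)
  · rintro ⟨x, F⟩ hp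
    simp only [Finset.mem_filter, Finset.mem_univ, true_and] at hp
    simp only [fweight, Finset.prod_insert (hp.2 x)]

/-- B3: forests of `k+1` arcs in which `j` is not a root correspond to pairs
`(u, F)` with `F` a `k`-forest with `j` root not reaching `u`. -/
lemma bij_insert_notroot (hnn : ∀ a b, 0 ≤ ε a b) (hloop : ∀ a, ε a a = 0)
    (k : ℕ) (j : Fin n) :
    ∑ p ∈ (Finset.univ.filter (fun p : Fin n × Finset (Fin n × Fin n) =>
        p.1 ≠ j ∧ 0 < ε p.1 j ∧ p.2 ∈ forestsKji ε k j j)).filter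
        (fun p => ¬ Relation.ReflTransGen (arcRel p.2) j p.1), ε p.1 j * fweight ε p.2
      = ∑ G ∈ (forestsK ε (k + 1)).filter (fun G => ∃ u, (u, j) ∈ G), fweight ε G := by
  refine Finset.sum_bij (fun p _ => insert (p.1, j) p.2) ?_ ?_ ?_ ?_
  · rintro ⟨x, F⟩ hp
    simp only [Finset.mem_filter, Finset.mem_univ, true_and] at hp
    obtain ⟨⟨hxj, hxpos, hF⟩, hnr⟩ := hp
    rw [mem_forestsKji] at hF
    obtain ⟨⟨hspf, hcard⟩, hroot, -⟩ := hF
    have hnotmem : (x, j) ∉ F := hroot x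
    simp only [Finset.mem_filter, mem_forestsK]
    refine ⟨⟨spf_insert hspf hxpos hroot hnr, ?_⟩, x, Finset.mem_insert_self _ _⟩
    rw [Finset.card_insert_of_notMem hnotmem, hcard]
  · rintro ⟨x₁, F₁⟩ h₁ ⟨x₂, F₂⟩ h₂ heq
    simp only [Finset.mem_filter, Finset.mem_univ, true_and] at h₁ h₂
    have hr₁ := (mem_forestsKji.mp h₁.1.2.2).2.1
    have hr₂ := (mem_forestsKji.mp h₂.1.2.2).2.1
    replace heq : insert (x₁, j) F₁ = insert (x₂, j) F₂ := heq
    have hrec : ∀ (x : Fin n) (F : Finset (Fin n × Fin n)), (∀ u, (u, j) ∉ F) →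
        (insert (x, j) F).filter (fun q => q.2 ≠ j) = F := by
      intro x F hc1
      ext q
      simp only [Finset.mem_filter, Finset.mem_insert]
      constructor
      · rintro ⟨rfl | hq, hne⟩
        · exact absurd rfl hne
        · exact hq
      · intro hq
        refine ⟨Or.inr hq, fun hq2 => ?_⟩
        exact hc1 q.1 (by rwa [← hq2, Prod.mk.eta])
    have hF : F₁ = F₂ := by
      rw [← hrec x₁ F₁ hr₁, ← hrec x₂ F₂ hr₂, heq]
    have hx : x₁ = x₂ := by
      have : (x₁, j) ∈ insert (x₂, j) F₂ := heq ▸ Finset.mem_insert_self _ _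
      rcases Finset.mem_insert.mp this with he | hmem
      · exact congrArg Prod.fst he
      · exact absurd hmem (hr₂ x₁)
    rw [Prod.ext_iff]; exact ⟨hx, hF⟩
  · intro G hG
    simp only [Finset.mem_filter, mem_forestsK] at hG
    obtain ⟨⟨hspf, hcard⟩, u, hu⟩ := hG
    have hune : u ≠ j := arc_ne hloop hspf hu
    have hupos : 0 < ε u j := hspf.1 _ hu
    have hnoin : ∀ v, (v, j) ∉ G.erase (u, j) := no_inarc_erase hspf.2.2 hu
    refine ⟨(u, G.erase (u, j)), ?_, Finset.insert_erase hu⟩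
    simp only [Finset.mem_filter, Finset.mem_univ, true_and]
    refine ⟨⟨hune, hupos, ?_⟩, ?_⟩
    · rw [mem_forestsKji]
      exact ⟨⟨spf_erase hspf _, by rw [Finset.card_erase_of_mem hu, hcard]; omega⟩,
        hnoin, Relation.ReflTransGen.refl⟩
    · intro h
      have hGh : Relation.ReflTransGen (arcRel G) j u := rtg_mono (Finset.erase_subset _ _) h
      exact hspf.2.1 j (Relation.TransGen.tail' hGh hu)
  · rintro ⟨x, F⟩ hp
    simp only [Finset.mem_filter, Finset.mem_univ, true_and] at hp
    have hroot := (mem_forestsKji.mp hp.1.2.2).2.1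
    simp only [fweight, Finset.prod_insert (hroot x)]

lemma par_eq_of_unique {F : Finset (Fin n × Fin n)} {z i : Fin n} (hz : (z, i) ∈ F)
    (huniq : ∀ w, (w, i) ∈ F → w = z) : par F i = z :=
  huniq _ (par_mem ⟨z, hz⟩)

/-- The swap bijection. -/
lemma bij_swap (hnn : ∀ a b, 0 ≤ ε a b) (hloop : ∀ a, ε a a = 0)
    (k : ℕ) {i j : Fin n} (hij : i ≠ j) :
    ∑ p ∈ (Finset.univ.filter (fun p : Fin n × Finset (Fin n × Fin n) =>
        p.1 ≠ i ∧ 0 < ε p.1 i ∧ p.2 ∈ forestsKji ε k j p.1)).filter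
        (fun p => ¬ Relation.ReflTransGen (arcRel p.2) j i ∧ ¬ ∀ u, (u, i) ∉ p.2),
        ε p.1 i * fweight ε p.2
      = ∑ p ∈ (Finset.univ.filter (fun p : Fin n × Finset (Fin n × Fin n) =>
        p.1 ≠ i ∧ 0 < ε p.1 i ∧ p.2 ∈ forestsKji ε k j i)).filter
        (fun p => ¬ Relation.ReflTransGen (arcRel p.2) j p.1),
        ε p.1 i * fweight ε p.2 := by
  refine Finset.sum_bij'
    (fun p _ => (par p.2 i, insert (p.1, i) (p.2.erase (par p.2 i, i))))
    (fun q _ => (par q.2 i, insert (q.1, i) (q.2.erase (par q.2 i, i))))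
    ?_ ?_ ?_ ?_ ?_
  -- maps into target
  · rintro ⟨x, F⟩ hp
    simp only [Finset.mem_filter, Finset.mem_univ, true_and] at hp
    obtain ⟨⟨hxi, hxpos, hF⟩, hnc2, hnc1⟩ := hp
    rw [mem_forestsKji] at hF
    obtain ⟨⟨hspf, hcard⟩, hroot, hreach⟩ := hF
    push_neg at hnc1
    obtain ⟨u₀, hu₀⟩ := hnc1
    have hy : (par F i, i) ∈ F := par_mem ⟨u₀, hu₀⟩
    set y := par F i with hydef
    set E := F.erase (y, i) with hEdef
    have hyne : y ≠ i := arc_ne hloop hspf hy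
    have hypos : 0 < ε y i := hspf.1 _ hy
    have hnoE : ∀ u, (u, i) ∉ E := no_inarc_erase hspf.2.2 hy
    have hinr : ¬ Relation.ReflTransGen (arcRel F) i x := by
      intro h
      rcases rtg_comparable hspf.2.2 h hreach with h' | h'
      · exact hij (rtg_root_eq hroot h')
      · exact hnc2 h'
    have hinrE : ¬ Relation.ReflTransGen (arcRel E) i x :=
      fun h => hinr (rtg_mono (Finset.erase_subset _ _) h)
    have hspfF' : IsSpForest ε (insert (x, i) E) :=
      spf_insert (spf_erase hspf _) hxpos hnoE hinrE
    have hxiE : (x, i) ∉ E := hnoE x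
    have hk : 1 ≤ k := hcard ▸ Finset.card_pos.mpr ⟨_, hy⟩
    have hreachE : Relation.ReflTransGen (arcRel E) j x := by
      rcases rtg_erase_split (y := y) (c := i) hreach with h | h
      · exact h
      · exact absurd h hinr
    simp only [Finset.mem_filter, Finset.mem_univ, true_and]
    refine ⟨⟨hyne, hypos, ?_⟩, ?_⟩
    · rw [mem_forestsKji]
      refine ⟨⟨hspfF', ?_⟩, ?_, ?_⟩
      · rw [Finset.card_insert_of_notMem hxiE, Finset.card_erase_of_mem hy, hcard]
        omega
      · intro u hu
        rcases Finset.mem_insert.mp hu with he | hu'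
        · rw [Prod.ext_iff] at he; simp at he
          exact hij he.2.symm
        · exact hroot u (Finset.mem_of_mem_erase hu')
      · exact (rtg_mono (Finset.subset_insert _ _) hreachE).tail
          (Finset.mem_insert_self _ _)
    · intro h
      rcases rtg_insert_split h with h' | ⟨h1, h2⟩
      · exact hnc2 ((rtg_mono (Finset.erase_subset _ _) h').tail hy)
      · exact hspf.2.1 i (Relation.TransGen.tail'
          (rtg_mono (Finset.erase_subset _ _) h2) hy)
  -- reverse maps into source
  · rintro ⟨u, F⟩ hq
    simp only [Finset.mem_filter, Finset.mem_univ, true_and] at hq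
    obtain ⟨⟨hui, hupos, hF⟩, hnr⟩ := hq
    rw [mem_forestsKji] at hF
    obtain ⟨⟨hspf, hcard⟩, hroot, hreach⟩ := hF
    rcases hreach.cases_tail with he | ⟨z, hjz, hzi⟩
    · exact absurd he hij
    · have hzpar : par F i = z := par_eq hspf.2.2 hzi
      set E := F.erase (z, i) with hEdef
      have hzne : z ≠ i := arc_ne hloop hspf hzi
      have hzpos : 0 < ε z i := hspf.1 _ hzi
      have hnoE : ∀ w, (w, i) ∉ E := no_inarc_erase hspf.2.2 hzi
      have hiu_nr : ¬ Relation.ReflTransGen (arcRel E) i u :=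
        fun h => hnr (hreach.trans (rtg_mono (Finset.erase_subset _ _) h))
      have hspfF : IsSpForest ε (insert (u, i) E) :=
        spf_insert (spf_erase hspf _) hupos hnoE hiu_nr
      have huiE : (u, i) ∉ E := hnoE u
      have hk : 1 ≤ k := hcard ▸ Finset.card_pos.mpr ⟨_, hzi⟩
      have hreachEz : Relation.ReflTransGen (arcRel E) j z := by
        rcases rtg_erase_split (y := z) (c := i) hjz with h | h
        · exact h
        · exact absurd (Relation.TransGen.tail' h hzi) (hspf.2.1 i)
      simp only [Finset.mem_filter, Finset.mem_univ, true_and, hzpar]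
      refine ⟨⟨hzne, hzpos, ?_⟩, ?_, ?_⟩
      · rw [mem_forestsKji]
        refine ⟨⟨hspfF, ?_⟩, ?_, rtg_mono (Finset.subset_insert _ _) hreachEz⟩
        · rw [Finset.card_insert_of_notMem huiE, Finset.card_erase_of_mem hzi, hcard]
          omega
        · intro w hw
          rcases Finset.mem_insert.mp hw with he | hw'
          · rw [Prod.ext_iff] at he; simp at he
            exact hij he.2.symm
          · exact hroot w (Finset.mem_of_mem_erase hw')
      · intro h
        rcases rtg_insert_split h with h' | ⟨h1, _⟩
        · rcases h'.cases_tail with he | ⟨w, _, hw⟩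
          · exact hij he
          · exact hnoE w hw
        · exact hnr (rtg_mono (Finset.erase_subset _ _) h1)
      · intro hall
        exact hall u (Finset.mem_insert_self _ _)
  -- left inverse
  · rintro ⟨x, F⟩ hp
    simp only [Finset.mem_filter, Finset.mem_univ, true_and] at hp
    obtain ⟨⟨hxi, hxpos, hF⟩, hnc2, hnc1⟩ := hp
    rw [mem_forestsKji] at hF
    obtain ⟨⟨hspf, hcard⟩, hroot, hreach⟩ := hF
    push_neg at hnc1
    obtain ⟨u₀, hu₀⟩ := hnc1
    have hy : (par F i, i) ∈ F := par_mem ⟨u₀, hu₀⟩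
    set y := par F i with hydef
    set E := F.erase (y, i) with hEdef
    have hnoE : ∀ u, (u, i) ∉ E := no_inarc_erase hspf.2.2 hy
    have hxiE : (x, i) ∉ E := hnoE x
    have hpar2 : par (insert (x, i) E) i = x := by
      refine par_eq_of_unique (Finset.mem_insert_self _ _) ?_
      intro w hw
      rcases Finset.mem_insert.mp hw with he | hw'
      · exact congrArg Prod.fst he
      · exact absurd hw' (hnoE w)
    simp only [hpar2]
    rw [Finset.erase_insert hxiE, Finset.insert_erase hy]
  -- right inverse
  · rintro ⟨u, F⟩ hq
    simp only [Finset.mem_filter, Finset.mem_univ, true_and] at hq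
    obtain ⟨⟨hui, hupos, hF⟩, hnr⟩ := hq
    rw [mem_forestsKji] at hF
    obtain ⟨⟨hspf, hcard⟩, hroot, hreach⟩ := hF
    rcases hreach.cases_tail with he | ⟨z, hjz, hzi⟩
    · exact absurd he hij
    · have hzpar : par F i = z := par_eq hspf.2.2 hzi
      set E := F.erase (z, i) with hEdef
      have hnoE : ∀ w, (w, i) ∉ E := no_inarc_erase hspf.2.2 hzi
      have huiE : (u, i) ∉ E := hnoE u
      have hpar2 : par (insert (u, i) E) i = u := by
        refine par_eq_of_unique (Finset.mem_insert_self _ _) ?_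
        intro w hw
        rcases Finset.mem_insert.mp hw with he | hw'
        · exact congrArg Prod.fst he
        · exact absurd hw' (hnoE w)
      simp only [hzpar, ← hEdef, hpar2]
      rw [Finset.erase_insert huiE, Finset.insert_erase hzi]
  -- weights
  · rintro ⟨x, F⟩ hp
    simp only [Finset.mem_filter, Finset.mem_univ, true_and] at hp
    obtain ⟨⟨hxi, hxpos, hF⟩, hnc2, hnc1⟩ := hp
    rw [mem_forestsKji] at hF
    obtain ⟨⟨hspf, hcard⟩, hroot, hreach⟩ := hF
    push_neg at hnc1
    obtain ⟨u₀, hu₀⟩ := hnc1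
    have hy : (par F i, i) ∈ F := par_mem ⟨u₀, hu₀⟩
    set y := par F i with hydef
    set E := F.erase (y, i) with hEdef
    have hnoE : ∀ u, (u, i) ∉ E := no_inarc_erase hspf.2.2 hy
    have hxiE : (x, i) ∉ E := hnoE x
    have h1 : fweight ε F = ε y i * fweight ε E := by
      rw [fweight, fweight, ← Finset.mul_prod_erase F _ hy]
    have h2 : fweight ε (insert (x, i) E) = ε x i * fweight ε E := by
      rw [fweight, fweight, Finset.prod_insert hxiE]
    simp only [h1, h2]
    ring

/-- rewrite a weighted row sum as a sum over pairs -/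
lemma sum_pairs (hnn : ∀ a b, 0 ≤ ε a b) (i : Fin n)
    (t : Fin n → Finset (Finset (Fin n × Fin n))) :
    ∑ x ∈ Finset.univ.filter (· ≠ i), ε x i * swt ε (t x)
      = ∑ p ∈ Finset.univ.filter (fun p : Fin n × Finset (Fin n × Fin n) =>
          p.1 ≠ i ∧ 0 < ε p.1 i ∧ p.2 ∈ t p.1), ε p.1 i * fweight ε p.2 := by
  rw [Finset.sum_filter, Finset.sum_filter, Fintype.sum_prod_type]
  refine Finset.sum_congr rfl fun x _ => ?_
  by_cases hx : x ≠ i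
  · rw [if_pos hx]
    by_cases hpos : 0 < ε x i
    · have : ∀ F : Finset (Fin n × Fin n),
          (if x ≠ i ∧ 0 < ε x i ∧ F ∈ t x then ε x i * fweight ε F else 0)
            = if F ∈ t x then ε x i * fweight ε F else 0 := by
        intro F
        by_cases hF : F ∈ t x
        · rw [if_pos ⟨hx, hpos, hF⟩, if_pos hF]
        · rw [if_neg (fun h => hF h.2.2), if_neg hF]
      simp only [this]
      rw [Finset.sum_ite_mem, Finset.univ_inter, swt, Finset.mul_sum]
    · have hz : ε x i = 0 := le_antisymm (not_lt.mp hpos) (hnn x i)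
      rw [hz, zero_mul]
      refine (Finset.sum_eq_zero fun F _ => ?_).symm
      by_cases hF : x ≠ i ∧ 0 < ε x i ∧ F ∈ t x
      · exact absurd hF.2.1 hpos
      · rw [if_neg hF]
  · rw [if_neg hx]
    refine (Finset.sum_eq_zero fun F _ => ?_).symm
    rw [if_neg (fun h => hx h.1)]

/-- The key combinatorial identity. -/
lemma key_identity (hnn : ∀ a b, 0 ≤ ε a b) (hloop : ∀ a, ε a a = 0)
    (k : ℕ) (i j : Fin n) :
    swt ε (forestsKji ε (k + 1) j i)
      + (∑ u ∈ Finset.univ.filter (· ≠ i), ε u i) * swt ε (forestsKji ε k j i)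
      - ∑ x ∈ Finset.univ.filter (· ≠ i), ε x i * swt ε (forestsKji ε k j x)
    = if i = j then swt ε (forestsK ε (k + 1)) else 0 := by
  have hS2 : (∑ u ∈ Finset.univ.filter (· ≠ i), ε u i) * swt ε (forestsKji ε k j i)
      = ∑ p ∈ Finset.univ.filter (fun p : Fin n × Finset (Fin n × Fin n) =>
          p.1 ≠ i ∧ 0 < ε p.1 i ∧ p.2 ∈ forestsKji ε k j i), ε p.1 i * fweight ε p.2 := by
    rw [Finset.sum_mul, sum_pairs hnn i (fun _ => forestsKji ε k j i)]
  have hS3 : ∑ x ∈ Finset.univ.filter (· ≠ i), ε x i * swt ε (forestsKji ε k j x)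
      = ∑ p ∈ Finset.univ.filter (fun p : Fin n × Finset (Fin n × Fin n) =>
          p.1 ≠ i ∧ 0 < ε p.1 i ∧ p.2 ∈ forestsKji ε k j p.1), ε p.1 i * fweight ε p.2 :=
    sum_pairs hnn i _
  set S3 := Finset.univ.filter (fun p : Fin n × Finset (Fin n × Fin n) =>
      p.1 ≠ i ∧ 0 < ε p.1 i ∧ p.2 ∈ forestsKji ε k j p.1) with hS3def
  set S2 := Finset.univ.filter (fun p : Fin n × Finset (Fin n × Fin n) =>
      p.1 ≠ i ∧ 0 < ε p.1 i ∧ p.2 ∈ forestsKji ε k j i) with hS2def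
  set f : Fin n × Finset (Fin n × Fin n) → ℝ := fun p => ε p.1 i * fweight ε p.2 with hfdef
  by_cases hij : i = j
  · subst hij
    rw [if_pos rfl, hS2, hS3]
    have hE3 : S3 = S2.filter (fun p => Relation.ReflTransGen (arcRel p.2) i p.1) := by
      ext ⟨x, F⟩
      simp only [hS3def, hS2def, Finset.mem_filter, Finset.mem_univ, true_and,
        mem_forestsKji]
      constructor
      · rintro ⟨hx, hp, ⟨hb, hr, hreach⟩⟩
        exact ⟨⟨hx, hp, hb, hr, Relation.ReflTransGen.refl⟩, hreach⟩
      · rintro ⟨⟨hx, hp, hb, hr, -⟩, hreach⟩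
        exact ⟨hx, hp, hb, hr, hreach⟩
    have hsplit := Finset.sum_filter_add_sum_filter_not S2
      (fun p => Relation.ReflTransGen (arcRel p.2) i p.1) f
    have e2 : ∑ p ∈ S2.filter (fun p => ¬ Relation.ReflTransGen (arcRel p.2) i p.1), f p
        = ∑ G ∈ (forestsK ε (k + 1)).filter (fun G => ∃ u, (u, i) ∈ G), fweight ε G :=
      bij_insert_notroot (ε := ε) hnn hloop k i
    have hA : forestsKji ε (k + 1) i i
        = (forestsK ε (k + 1)).filter (fun F => ∀ u, (u, i) ∉ F) := by
      ext F
      simp only [forestsKji, Finset.mem_filter]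
      constructor
      · rintro ⟨hb, hr, -⟩; exact ⟨hb, hr⟩
      · rintro ⟨hb, hr⟩; exact ⟨hb, hr, Relation.ReflTransGen.refl⟩
    have hsig := Finset.sum_filter_add_sum_filter_not (forestsK ε (k + 1))
      (fun F => ∀ u, (u, i) ∉ F) (fweight ε)
    have hco : (forestsK ε (k + 1)).filter (fun F => ¬ ∀ u, (u, i) ∉ F)
        = (forestsK ε (k + 1)).filter (fun F => ∃ u, (u, i) ∈ F) := by
      ext F
      simp only [Finset.mem_filter, not_forall, not_not]
    rw [hco] at hsig
    rw [hE3, hA, swt, swt]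
    linarith [hsplit, e2, hsig]
  · rw [if_neg hij, hS2, hS3]
    replace hij : i ≠ j := hij
    have hsplitS3 := Finset.sum_filter_add_sum_filter_not S3
      (fun p => Relation.ReflTransGen (arcRel p.2) j i) f
    have hsplitS3' := Finset.sum_filter_add_sum_filter_not
      (S3.filter (fun p => ¬ Relation.ReflTransGen (arcRel p.2) j i))
      (fun p => ∀ u, (u, i) ∉ p.2) f
    have hE2 : (S3.filter (fun p => ¬ Relation.ReflTransGen (arcRel p.2) j i)).filter
        (fun p => ∀ u, (u, i) ∉ p.2) = S3.filter (fun p => ∀ u, (u, i) ∉ p.2) := by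
      ext ⟨x, F⟩
      simp only [Finset.mem_filter]
      constructor
      · rintro ⟨⟨h1, _⟩, h3⟩; exact ⟨h1, h3⟩
      · rintro ⟨h1, h3⟩
        refine ⟨⟨h1, fun hreach => ?_⟩, h3⟩
        rcases hreach.cases_tail with he | ⟨y, -, hy⟩
        · exact hij he
        · exact h3 y hy
    have hE2' : (S3.filter (fun p => ¬ Relation.ReflTransGen (arcRel p.2) j i)).filter
        (fun p => ¬ ∀ u, (u, i) ∉ p.2)
        = S3.filter (fun p => ¬ Relation.ReflTransGen (arcRel p.2) j i
            ∧ ¬ ∀ u, (u, i) ∉ p.2) := by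
      rw [Finset.filter_filter]
    have hE1 : S3.filter (fun p => Relation.ReflTransGen (arcRel p.2) j i)
        = S2.filter (fun p => Relation.ReflTransGen (arcRel p.2) j p.1) := by
      ext ⟨x, F⟩
      simp only [hS3def, hS2def, Finset.mem_filter, Finset.mem_univ, true_and,
        mem_forestsKji]
      constructor
      · rintro ⟨⟨hx, hp, ⟨hb, hr, hreach⟩⟩, hc⟩
        exact ⟨⟨hx, hp, hb, hr, hc⟩, hreach⟩
      · rintro ⟨⟨hx, hp, hb, hr, hc⟩, hreach⟩
        exact ⟨⟨hx, hp, hb, hr, hreach⟩, hc⟩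
    have e1 : ∑ p ∈ S3.filter (fun p => ∀ u, (u, i) ∉ p.2), f p
        = ∑ G ∈ forestsKji ε (k + 1) j i, fweight ε G :=
      bij_insert_A (ε := ε) hnn hloop k hij
    have e2 : ∑ p ∈ S3.filter (fun p => ¬ Relation.ReflTransGen (arcRel p.2) j i
          ∧ ¬ ∀ u, (u, i) ∉ p.2), f p
        = ∑ p ∈ S2.filter (fun p => ¬ Relation.ReflTransGen (arcRel p.2) j p.1), f p :=
      bij_swap (ε := ε) hnn hloop k hij
    have e3 : ∑ p ∈ S3.filter (fun p => Relation.ReflTransGen (arcRel p.2) j i), f p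
        = ∑ p ∈ S2.filter (fun p => Relation.ReflTransGen (arcRel p.2) j p.1), f p := by
      rw [hE1]
    have hsplitS2 := Finset.sum_filter_add_sum_filter_not S2
      (fun p => Relation.ReflTransGen (arcRel p.2) j p.1) f
    rw [hE2, hE2'] at hsplitS3'
    rw [swt]
    linarith [hsplitS3, hsplitS3', hsplitS2]

noncomputable def Qk (ε : Fin n → Fin n → ℝ) (k : ℕ) : Matrix (Fin n) (Fin n) ℝ :=
  Matrix.of fun i j => swt ε (forestsKji ε k j i)

noncomputable def sig (ε : Fin n → Fin n → ℝ) (k : ℕ) : ℝ := swt ε (forestsK ε k)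

lemma spf_empty : IsSpForest ε (∅ : Finset (Fin n × Fin n)) := by
  refine ⟨fun p hp => absurd hp (Finset.notMem_empty _), fun v h => ?_, ?_⟩
  · rcases Relation.TransGen.tail'_iff.mp h with ⟨w, _, harc⟩
    exact absurd harc (Finset.notMem_empty _)
  · intro w z₁ z₂ h1 _
    exact absurd h1 (Finset.notMem_empty _)

lemma rtg_empty {j i : Fin n} :
    Relation.ReflTransGen (arcRel (∅ : Finset (Fin n × Fin n))) j i ↔ j = i := by
  constructor
  · intro h
    rcases h.cases_tail with he | ⟨y, _, hy⟩
    · exact he.symm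
    · exact absurd hy (Finset.notMem_empty _)
  · rintro rfl; exact Relation.ReflTransGen.refl

lemma forestsK_zero : forestsK ε 0 = {∅} := by
  ext F
  simp only [mem_forestsK, Finset.mem_singleton, Finset.card_eq_zero]
  constructor
  · rintro ⟨-, h⟩; exact h
  · rintro rfl; exact ⟨spf_empty, rfl⟩

lemma sig_zero : sig ε 0 = 1 := by
  rw [sig, forestsK_zero]
  simp [swt, fweight]

lemma Qk_zero : Qk ε 0 = 1 := by
  ext i j
  rw [Qk, Matrix.of_apply, Matrix.one_apply]
  have : forestsKji ε 0 j i = if j = i then {∅} else ∅ := by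
    rw [forestsKji, forestsK_zero]
    by_cases h : j = i
    · rw [if_pos h]
      ext F
      simp only [Finset.mem_filter, Finset.mem_singleton]
      constructor
      · rintro ⟨hF, -⟩; exact hF
      · rintro rfl
        exact ⟨rfl, fun u => Finset.notMem_empty _, rtg_empty.mpr h⟩
    · rw [if_neg h]
      ext F
      simp only [Finset.mem_filter, Finset.mem_singleton, Finset.notMem_empty,
        iff_false, not_and]
      rintro rfl hroot hreach
      exact h (rtg_empty.mp hreach)
  rw [this]
  by_cases h : j = i
  · rw [if_pos h, if_pos h.symm]
    simp [swt, fweight]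
  · rw [if_neg h, if_neg (fun he => h he.symm)]
    simp [swt]

lemma forestsK_gt {k : ℕ} (h : maxArcs ε < k) : forestsK ε k = ∅ := by
  rw [Finset.eq_empty_iff_forall_notMem]
  intro F hF
  rw [mem_forestsK] at hF
  have : F.card ≤ maxArcs ε :=
    Finset.le_sup (f := Finset.card) (Finset.mem_filter.mpr ⟨Finset.mem_univ F, hF.1⟩)
  omega
lemma sig_gt {k : ℕ} (h : maxArcs ε < k) : sig ε k = 0 := by
  rw [sig, forestsK_gt h, swt, Finset.sum_empty]

lemma Qk_gt {k : ℕ} (h : maxArcs ε < k) : Qk ε k = 0 := by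
  ext i j
  rw [Qk, Matrix.of_apply, forestsKji, forestsK_gt h, Finset.filter_empty, swt,
    Finset.sum_empty]
  rfl

lemma fweight_pos {F : Finset (Fin n × Fin n)} (h : IsSpForest ε F) : 0 < fweight ε F :=
  Finset.prod_pos fun p hp => h.1 p hp

lemma sig_nonneg (k : ℕ) : 0 ≤ sig ε k :=
  Finset.sum_nonneg fun F hF => (fweight_pos (mem_forestsK.mp hF).1).le

lemma sig_max_pos : 0 < sig ε (maxArcs ε) := by
  obtain ⟨F, hF, hsup⟩ := Finset.exists_mem_eq_sup
    (Finset.univ.filter (fun F : Finset (Fin n × Fin n) => IsSpForest ε F))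
    ⟨∅, Finset.mem_filter.mpr ⟨Finset.mem_univ _, spf_empty⟩⟩ Finset.card
  have hFs : IsSpForest ε F := (Finset.mem_filter.mp hF).2
  have hmem : F ∈ forestsK ε (maxArcs ε) := mem_forestsK.mpr ⟨hFs, hsup.symm⟩
  exact Finset.sum_pos (fun G hG => fweight_pos (mem_forestsK.mp hG).1) ⟨F, hmem⟩

/-- The matrix recursion. -/
lemma Qk_rec (hnn : ∀ a b, 0 ≤ ε a b) (hloop : ∀ a, ε a a = 0) (k : ℕ) :
    Qk ε (k + 1) + Kirchhoff ε * Qk ε k = sig ε (k + 1) • (1 : Matrix (Fin n) (Fin n) ℝ) := by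
  ext i j
  have hkey := key_identity hnn hloop k i j
  have hrow : ∑ x, Kirchhoff ε i x * swt ε (forestsKji ε k j x)
      = (∑ u ∈ Finset.univ.filter (· ≠ i), ε u i) * swt ε (forestsKji ε k j i)
        - ∑ x ∈ Finset.univ.filter (· ≠ i), ε x i * swt ε (forestsKji ε k j x) := by
    rw [← Finset.add_sum_erase Finset.univ _ (Finset.mem_univ i)]
    have h1 : Kirchhoff ε i i = ∑ u ∈ Finset.univ.filter (· ≠ i), ε u i := by
      rw [Kirchhoff, Matrix.of_apply, if_pos rfl]
    have h2 : ∀ x ∈ Finset.univ.erase i,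
        Kirchhoff ε i x * swt ε (forestsKji ε k j x)
          = -(ε x i * swt ε (forestsKji ε k j x)) := by
      intro x hx
      have hxne : x ≠ i := Finset.ne_of_mem_erase hx
      rw [Kirchhoff, Matrix.of_apply, if_neg (fun he => hxne he.symm), neg_mul]
    rw [h1, Finset.sum_congr rfl h2, Finset.sum_neg_distrib]
    have h3 : Finset.univ.erase i = Finset.univ.filter (· ≠ i) := by
      rw [Finset.filter_ne']
    rw [h3]
    ring
  simp only [Matrix.add_apply, Matrix.mul_apply, Matrix.smul_apply, Matrix.one_apply,
    Qk, Matrix.of_apply, smul_eq_mul, mul_ite, mul_one, mul_zero]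
  rw [hrow]
  by_cases h : i = j
  · rw [if_pos h]
    rw [if_pos h] at hkey
    rw [sig]
    linarith
  · rw [if_neg h]
    rw [if_neg h] at hkey
    linarith

/-- The matrix-forest polynomial identity. -/
lemma poly_id (hnn : ∀ a b, 0 ≤ ε a b) (hloop : ∀ a, ε a a = 0) (τ : ℝ) :
    (1 + τ • Kirchhoff ε) * (∑ k ∈ Finset.range (maxArcs ε + 1), τ ^ k • Qk ε k)
      = (∑ k ∈ Finset.range (maxArcs ε + 1), τ ^ k * sig ε k)
          • (1 : Matrix (Fin n) (Fin n) ℝ) := by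
  set m := maxArcs ε with hm
  set P : Matrix (Fin n) (Fin n) ℝ := ∑ k ∈ Finset.range (m + 1), τ ^ k • Qk ε k with hP
  have h1 : Kirchhoff ε * P
      = ∑ k ∈ Finset.range (m + 1),
          τ ^ k • (sig ε (k + 1) • (1 : Matrix (Fin n) (Fin n) ℝ) - Qk ε (k + 1)) := by
    rw [hP, Finset.mul_sum]
    refine Finset.sum_congr rfl fun k _ => ?_
    rw [Matrix.mul_smul, eq_sub_of_add_eq' (Qk_rec hnn hloop k)]
  have h2 : (1 + τ • Kirchhoff ε) * P = P + τ • (Kirchhoff ε * P) := by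
    rw [add_mul, one_mul, Matrix.smul_mul]
  rw [h2, h1, Finset.smul_sum]
  have h3 : ∀ k ∈ Finset.range (m + 1),
      τ • τ ^ k • (sig ε (k + 1) • (1 : Matrix (Fin n) (Fin n) ℝ) - Qk ε (k + 1))
        = (τ ^ (k + 1) * sig ε (k + 1)) • (1 : Matrix (Fin n) (Fin n) ℝ)
            - τ ^ (k + 1) • Qk ε (k + 1) := by
    intro k _
    rw [smul_smul, smul_sub, smul_smul, ← pow_succ']
  rw [Finset.sum_congr rfl h3, Finset.sum_sub_distrib]
  have h4 : ∑ k ∈ Finset.range (m + 1), τ ^ (k + 1) • Qk ε (k + 1) = P - 1 := by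
    have := Finset.sum_range_succ' (fun k => τ ^ k • Qk ε k) (m + 1)
    rw [Finset.sum_range_succ _ (m + 1), Qk_gt (Nat.lt_succ_self m), smul_zero,
      add_zero] at this
    rw [pow_zero, Qk_zero, one_smul] at this
    rw [eq_sub_iff_add_eq]
    exact this.symm
  have h5 : ∑ k ∈ Finset.range (m + 1),
      (τ ^ (k + 1) * sig ε (k + 1)) • (1 : Matrix (Fin n) (Fin n) ℝ)
        = ((∑ k ∈ Finset.range (m + 1), τ ^ k * sig ε k) - 1)
            • (1 : Matrix (Fin n) (Fin n) ℝ) := by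
    rw [← Finset.sum_smul]
    congr 1
    have := Finset.sum_range_succ' (fun k => τ ^ k * sig ε k) (m + 1)
    rw [Finset.sum_range_succ (fun k => τ ^ k * sig ε k) (m + 1),
      sig_gt (Nat.lt_succ_self m), mul_zero, add_zero] at this
    rw [this, pow_zero, sig_zero, mul_one]
    ring
  rw [h4, h5, sub_smul, one_smul]
  abel

/-- The inverse formula for `I + τL`. -/
lemma inv_formula (hnn : ∀ a b, 0 ≤ ε a b) (hloop : ∀ a, ε a a = 0) {τ : ℝ} (hτ : 0 < τ) :
    (1 + τ • Kirchhoff ε)⁻¹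
      = (∑ k ∈ Finset.range (maxArcs ε + 1), τ ^ k * sig ε k)⁻¹
          • ∑ k ∈ Finset.range (maxArcs ε + 1), τ ^ k • Qk ε k := by
  have hs : 0 < ∑ k ∈ Finset.range (maxArcs ε + 1), τ ^ k * sig ε k := by
    refine Finset.sum_pos' (fun k _ => mul_nonneg (pow_nonneg hτ.le k) (sig_nonneg k))
      ⟨0, Finset.mem_range.mpr (Nat.succ_pos _), by simp [sig_zero]⟩
  apply Matrix.inv_eq_right_inv
  rw [Matrix.mul_smul, poly_id hnn hloop, smul_smul, inv_mul_cancel₀ hs.ne', one_smul]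

end Aux3

open Aux Aux2 Aux3

/-- `J̄ = lim_{τ → ∞} (I + τL)⁻¹`. -/
theorem stmt18 (ε : Fin n → Fin n → ℝ) (hnonneg : ∀ i j, 0 ≤ ε i j)
    (hloop : ∀ i, ε i i = 0) :
    Filter.Tendsto (fun τ : ℝ => (1 + τ • Kirchhoff ε)⁻¹)
      Filter.atTop (nhds (Jbar ε)) := by
  set m := maxArcs ε with hm
  set g : ℝ → ℝ := fun τ => ∑ k ∈ Finset.range (m + 1), sig ε k * (τ⁻¹) ^ (m - k)
    with hg
  set H : ℝ → Matrix (Fin n) (Fin n) ℝ :=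
    fun τ => ∑ k ∈ Finset.range (m + 1), (τ⁻¹) ^ (m - k) • Qk ε k with hH
  have hlim_g : Filter.Tendsto g Filter.atTop (nhds (sig ε m)) := by
    have h : Filter.Tendsto (fun τ : ℝ => ∑ k ∈ Finset.range (m + 1),
        sig ε k * (τ⁻¹) ^ (m - k)) Filter.atTop
        (nhds (∑ k ∈ Finset.range (m + 1), if k = m then sig ε k else 0)) := by
      refine tendsto_finset_sum _ fun k hk => ?_
      by_cases hkm : k = m
      · subst hkm
        simp only [Nat.sub_self, pow_zero, mul_one, if_pos rfl]
        exact tendsto_const_nhds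
      · rw [if_neg hkm]
        have he : m - k ≠ 0 := by
          rw [Finset.mem_range] at hk; omega
        have := (tendsto_inv_atTop_zero (𝕜 := ℝ)).pow (m - k)
        rw [zero_pow he] at this
        simpa using this.const_mul (sig ε k)
    have : (∑ k ∈ Finset.range (m + 1), if k = m then sig ε k else 0) = sig ε m := by
      rw [Finset.sum_ite_eq' (Finset.range (m + 1)) m (fun k => sig ε k),
        if_pos (Finset.self_mem_range_succ m)]
    rwa [this] at h
  have hlim_H : Filter.Tendsto H Filter.atTop (nhds (Qk ε m)) := by
    have h : Filter.Tendsto (fun τ : ℝ => ∑ k ∈ Finset.range (m + 1),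
        (τ⁻¹) ^ (m - k) • Qk ε k) Filter.atTop
        (nhds (∑ k ∈ Finset.range (m + 1), if k = m then Qk ε k else 0)) := by
      refine tendsto_finset_sum _ fun k hk => ?_
      by_cases hkm : k = m
      · subst hkm
        simp only [Nat.sub_self, pow_zero, one_smul, if_pos rfl]
        exact tendsto_const_nhds
      · rw [if_neg hkm]
        have he : m - k ≠ 0 := by
          rw [Finset.mem_range] at hk; omega
        have h0 := (tendsto_inv_atTop_zero (𝕜 := ℝ)).pow (m - k)
        rw [zero_pow he] at h0
        have := h0.smul_const (Qk ε k)
        simpa using this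
    have : (∑ k ∈ Finset.range (m + 1), if k = m then Qk ε k else 0) = Qk ε m := by
      rw [Finset.sum_ite_eq' (Finset.range (m + 1)) m (fun k => Qk ε k),
        if_pos (Finset.self_mem_range_succ m)]
    rwa [this] at h
  have hσ : (0 : ℝ) < sig ε m := sig_max_pos
  have hcomb : Filter.Tendsto (fun τ => (g τ)⁻¹ • H τ) Filter.atTop
      (nhds ((sig ε m)⁻¹ • Qk ε m)) :=
    (hlim_g.inv₀ hσ.ne').smul hlim_H
  have hJ : Jbar ε = (sig ε m)⁻¹ • Qk ε m := rfl
  rw [hJ]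
  refine Filter.Tendsto.congr' ?_ hcomb
  filter_upwards [Filter.eventually_gt_atTop (0 : ℝ)] with τ hτ
  have hτ0 : τ ≠ 0 := hτ.ne'
  have hpm : τ ^ m ≠ 0 := pow_ne_zero m hτ0
  have hgs : ∑ k ∈ Finset.range (m + 1), τ ^ k * sig ε k = τ ^ m * g τ := by
    rw [hg, Finset.mul_sum]
    refine Finset.sum_congr rfl fun k hk => ?_
    have hkm : k ≤ m := by rw [Finset.mem_range] at hk; omega
    have hpow : τ ^ m = τ ^ k * τ ^ (m - k) := by
      rw [← pow_add]
      congr 1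
      omega
    rw [hpow, inv_pow]
    field_simp
  have hPs : ∑ k ∈ Finset.range (m + 1), τ ^ k • Qk ε k = τ ^ m • H τ := by
    rw [hH, Finset.smul_sum]
    refine Finset.sum_congr rfl fun k hk => ?_
    have hpow : τ ^ m = τ ^ k * τ ^ (m - k) := by
      rw [← pow_add]
      congr 1
      rw [Finset.mem_range] at hk
      omega
    rw [smul_smul, hpow, inv_pow, mul_assoc, mul_inv_cancel₀ (pow_ne_zero _ hτ0), mul_one]
  rw [inv_formula hnonneg hloop hτ, hgs, hPs, smul_smul]
  congr 1
  rw [mul_inv, mul_comm ((τ ^ m)⁻¹), mul_assoc, inv_mul_cancel₀ hpm, mul_one]
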